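/- arXiv:1406.1281 — 4 statements merged into one kernel-verified Lean document; each statement's English description precedes it below -/
import Mathlib

section
/- Let k ≥ 1, m ≥ 1 and n ≥ 1 be integers and let C be a linear code of length n over R_{k,m}. Then the Gray map φ_{km} is injective and F_2-linear, φ_{km}(C^⊥) = φ_{km}(C)^⊥ (dual taken in F_2^{kmn} with the standard dot product), and in particular if C is self-dual over R_{k,m}, then φ_{km}(C) is a binary self-dual code of length kmn whose Hamming weight distribution equals the Lee weight distribution of C. -/
open MvPolynomial

set_option synthInstance.maxHeartbeats 1000000
set_option maxHeartbeats 1000000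

/-- The ring `R_{k,m} = F_2[u,v]/⟨u^k, v^m⟩`. -/
noncomputable abbrev Rkm (k m : ℕ) : Type :=
  MvPolynomial (Fin 2) (ZMod 2) ⧸
    (Ideal.span {(X 0 : MvPolynomial (Fin 2) (ZMod 2)) ^ k, (X 1 : MvPolynomial (Fin 2) (ZMod 2)) ^ m})

/-- `u`, the image of `X 0` in `R_{k,m}`. -/
noncomputable def Rkm.u (k m : ℕ) : Rkm k m := Ideal.Quotient.mk _ (X 0)

/-- `v`, the image of `X 1` in `R_{k,m}`. -/
noncomputable def Rkm.v (k m : ℕ) : Rkm k m := Ideal.Quotient.mk _ (X 1)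

/-- The `t`-th Gray interval (0-indexed): `I_{2s+1} = {s,…,k-1-s}` and
`I_{2s+2} = {s+1,…,k-1-s}`, i.e. `I_{t+1} = {⌈(t+1)/2⌉,…,k-1-⌊t/2⌋}` for `t = 0,…,k-1`. -/
def grayInterval (k : ℕ) (t : Fin k) : Finset (Fin k) :=
  Finset.univ.filter fun i : Fin k => ((t : ℕ) + 1) / 2 ≤ (i : ℕ) ∧ (i : ℕ) ≤ k - 1 - (t : ℕ) / 2

/-!
Write `σ(x)` for the sum of the coordinates of `x ∈ R_{k,m}` in the monomial basis `u^i v^j`.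
The Gray map is an isometry from the form `σ(xy)` to the standard dot product: both `u^i v^j`
and `u^{i'} v^{j'}` have a `1` in Gray coordinate `(s, t)` iff `i, i' ∈ I_t` and `j, j' ∈ J_s`,
and the number of `t` with `i, i' ∈ I_t` is odd exactly when `i + i' < k`, i.e. when
`u^i u^{i'} ≠ 0`. The form `σ(xy)` is nondegenerate, since `σ(x u^{k-1-a} v^{m-1-b})` is the
sum of the coefficients of `x` at exponents `≤ (a, b)`. Hence the Gray map is injective, so
bijective by counting dimensions, and `φ(b) ⊥ φ(C)` iff `σ(r (a · b)) = 0` for all `a ∈ C`,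
`r ∈ R`, i.e. iff `b ∈ C^⊥`.
-/

open Finset Module Matrix

theorem eq_zero_of_forall_sum_le_eq_zero {α M : Type*} [PartialOrder α] [Fintype α]
    [DecidableLE α] [AddCommMonoid M] {f : α → M} (h : ∀ a, ∑ b with b ≤ a, f b = 0) :
    f = 0 := by
  funext a
  induction a using WellFoundedLT.induction with
  | _ a ih =>
    calc f a = ∑ b with b ≤ a, f b :=
          (sum_eq_single_of_mem a (by simp) fun b hb hba =>
            ih b (lt_of_le_of_ne (mem_filter.1 hb).2 hba)).symm
      _ = 0 := h a

section DotProductIsometry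

variable {K R ι κ : Type*} [Field K] [CommRing R] [Module K R] [Fintype ι] [Fintype κ]
  {σ : R →ₗ[K] K} {Φ : (ι → R) →ₗ[K] (κ → K)}

theorem injective_of_dotProduct_map_eq (hσ : ∀ x, (∀ y, σ (x * y) = 0) → x = 0)
    (hΦ : ∀ a b, Φ a ⬝ᵥ Φ b = σ (a ⬝ᵥ b)) : Function.Injective Φ := by
  classical
  refine (injective_iff_map_eq_zero Φ).2 fun a ha => funext fun j => hσ _ fun y => ?_
  rw [← dotProduct_single, ← hΦ, ha, zero_dotProduct]

theorem image_orthogonal_eq_orthogonal_image [FiniteDimensional K R]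
    (hσ : ∀ x, (∀ y, σ (x * y) = 0) → x = 0) (hΦ : ∀ a b, Φ a ⬝ᵥ Φ b = σ (a ⬝ᵥ b))
    (hdim : finrank K (ι → R) = Fintype.card κ) (C : Submodule R (ι → R)) :
    Φ '' {b | ∀ a ∈ C, a ⬝ᵥ b = 0} = {w | ∀ x ∈ Φ '' C, x ⬝ᵥ w = 0} := by
  have hsurj : Function.Surjective Φ :=
    (LinearMap.injective_iff_surjective_of_finrank_eq_finrank (by simpa using hdim)).1
      (injective_of_dotProduct_map_eq hσ hΦ)
  ext w
  obtain ⟨b, rfl⟩ := hsurj w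
  simp only [(injective_of_dotProduct_map_eq hσ hΦ).mem_set_image, Set.forall_mem_image,
    Set.mem_ofPred_eq, SetLike.mem_coe, hΦ]
  refine ⟨fun hb a ha => by rw [hb a ha, map_zero], fun hb a ha => hσ _ fun y => ?_⟩
  rw [← hb (C.smul_mem y ha), smul_dotProduct, smul_eq_mul, mul_comm]

end DotProductIsometry

theorem mem_grayInterval {k : ℕ} {t i : Fin k} :
    i ∈ grayInterval k t ↔ ((t : ℕ) + 1) / 2 ≤ i ∧ (i : ℕ) ≤ k - 1 - t / 2 := by
  simp [grayInterval]

theorem card_filter_mem_grayInterval {k : ℕ} (i i' : Fin k) :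
    #{t | i ∈ grayInterval k t ∧ i' ∈ grayInterval k t} =
      min (2 * min (i : ℕ) i' + 1) (2 * (k - max (i : ℕ) i')) := by
  have hM : min (2 * min (i : ℕ) i') (2 * (k - 1 - max (i : ℕ) i') + 1) < k := by omega
  have hfilter : ({t | i ∈ grayInterval k t ∧ i' ∈ grayInterval k t} : Finset (Fin k)) =
      Iic ⟨_, hM⟩ := by
    ext t
    simp only [mem_filter, mem_univ, true_and, mem_grayInterval, mem_Iic, Fin.le_def]
    omega
  rw [hfilter, Fin.card_Iic, Fin.val_mk]
  omega

theorem sum_ite_mem_grayInterval_mul {K : Type*} [CommRing K] [CharP K 2] {k : ℕ}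
    (i i' : Fin k) :
    ∑ t, (if i ∈ grayInterval k t then (1 : K) else 0) *
        (if i' ∈ grayInterval k t then 1 else 0) = if (i : ℕ) + i' < k then 1 else 0 := by
  simp_rw [ite_zero_mul_ite_zero, mul_one, sum_boole, card_filter_mem_grayInterval]
  have hi := i.isLt
  simp only [CharTwo.natCast_eq_ite, ← Nat.not_odd_iff_even, ite_not]
  exact if_congr (by rw [Nat.odd_iff]; omega) rfl rfl

section MonomialBasis

variable {K R ι : Type*} [CommRing K] [CommRing R] [Module K R] {k m : ℕ}
  (B : Basis (Fin k × Fin m) K R)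

noncomputable def symbolGrayMap : R →ₗ[K] Fin m × Fin k → K :=
  LinearMap.pi fun t => ∑ j ∈ grayInterval m t.1, ∑ i ∈ grayInterval k t.2, B.coord (i, j)

noncomputable def grayMap : (ι → R) →ₗ[K] Fin m × Fin k × ι → K :=
  LinearMap.pi fun q =>
    LinearMap.proj (q.1, q.2.1) ∘ₗ symbolGrayMap B ∘ₗ LinearMap.proj q.2.2

theorem symbolGrayMap_apply (x : R) (t : Fin m × Fin k) :
    symbolGrayMap B x t =
      ∑ j ∈ grayInterval m t.1, ∑ i ∈ grayInterval k t.2, B.repr x (i, j) := by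
  simp [symbolGrayMap]

theorem grayMap_apply (a : ι → R) (q : Fin m × Fin k × ι) :
    grayMap B a q = symbolGrayMap B (a q.2.2) (q.1, q.2.1) :=
  rfl

theorem symbolGrayMap_basis (p : Fin k × Fin m) (tm : Fin m) (tk : Fin k) :
    symbolGrayMap B (B p) (tm, tk) =
      (if p.2 ∈ grayInterval m tm then 1 else 0) *
        (if p.1 ∈ grayInterval k tk then 1 else 0) := by
  rw [symbolGrayMap_apply, ← sum_ite_eq _ p.2 fun _ => (1 : K),
    ← sum_ite_eq _ p.1 fun _ => (1 : K), sum_mul_sum]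
  simp only [B.repr_self, Finsupp.single_apply, Prod.ext_iff, ite_zero_mul_ite_zero, mul_one,
    and_comm]

variable {B} {u v : R}

theorem sumCoords_basis_mul (hu : u ^ k = 0) (hv : v ^ m = 0)
    (hB : ∀ p, B p = u ^ (p.1 : ℕ) * v ^ (p.2 : ℕ)) (p q : Fin k × Fin m) :
    B.sumCoords (B p * B q) = if (p.1 : ℕ) + q.1 < k ∧ (p.2 : ℕ) + q.2 < m then 1 else 0 := by
  have hpq : B p * B q = u ^ ((p.1 : ℕ) + q.1) * v ^ ((p.2 : ℕ) + q.2) := by rw [hB, hB]; ring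
  split_ifs with h
  · rw [hpq, ← hB (⟨_, h.1⟩, ⟨_, h.2⟩), B.sumCoords_self_apply]
  · rcases not_and_or.1 h with h | h
    · rw [hpq, pow_eq_zero_of_le (not_lt.1 h) hu, zero_mul, map_zero]
    · rw [hpq, pow_eq_zero_of_le (not_lt.1 h) hv, mul_zero, map_zero]

variable [IsScalarTower K R R]

theorem sumCoords_mul_basis (hu : u ^ k = 0) (hv : v ^ m = 0)
    (hB : ∀ p, B p = u ^ (p.1 : ℕ) * v ^ (p.2 : ℕ)) (x : R) (q : Fin k × Fin m) :
    B.sumCoords (x * B q) =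
      ∑ p, B.repr x p * if (p.1 : ℕ) + q.1 < k ∧ (p.2 : ℕ) + q.2 < m then 1 else 0 := by
  conv_lhs => rw [← B.sum_repr x]
  simp only [sum_mul, smul_mul_assoc, map_sum, map_smul, sumCoords_basis_mul hu hv hB,
    smul_eq_mul]

theorem eq_zero_of_forall_sumCoords_mul_eq_zero (hu : u ^ k = 0) (hv : v ^ m = 0)
    (hB : ∀ p, B p = u ^ (p.1 : ℕ) * v ^ (p.2 : ℕ)) {x : R}
    (hx : ∀ y, B.sumCoords (x * y) = 0) : x = 0 := by
  have hrepr : ⇑(B.repr x) = 0 := eq_zero_of_forall_sum_le_eq_zero fun p => by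
    rw [← hx (B (p.1.rev, p.2.rev)), sumCoords_mul_basis hu hv hB, sum_filter]
    refine sum_congr rfl fun r _ => ?_
    have := p.1.isLt; have := p.2.isLt
    simp only [Prod.le_def, Fin.le_def, Fin.val_rev]
    split_ifs <;> simp <;> omega
  exact B.ext_elem_iff.2 fun p => by simp [hrepr]

variable [SMulCommClass K R R] [CharP K 2]

theorem symbolGrayMap_dotProduct (hu : u ^ k = 0) (hv : v ^ m = 0)
    (hB : ∀ p, B p = u ^ (p.1 : ℕ) * v ^ (p.2 : ℕ)) (x y : R) :
    symbolGrayMap B x ⬝ᵥ symbolGrayMap B y = B.sumCoords (x * y) := by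
  suffices (dotProductBilin K K).compl₁₂ (symbolGrayMap B) (symbolGrayMap B) =
      (LinearMap.mul K R).compr₂ B.sumCoords from LinearMap.congr_fun₂ this x y
  refine LinearMap.ext_basis B B fun p q => ?_
  simp only [LinearMap.compl₁₂_apply, dotProductBilin_apply_apply, LinearMap.compr₂_apply,
    LinearMap.mul_apply', sumCoords_basis_mul hu hv hB, dotProduct, Fintype.sum_prod_type,
    symbolGrayMap_basis]
  refine (Fintype.sum_congr _ _ fun _ => Fintype.sum_congr _ _ fun _ =>
    mul_mul_mul_comm _ _ _ _).trans ?_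
  simp_rw [← mul_sum, ← sum_mul]
  rw [sum_ite_mem_grayInterval_mul, sum_ite_mem_grayInterval_mul, ite_zero_mul_ite_zero,
    mul_one]
  exact if_congr and_comm rfl rfl

theorem grayMap_dotProduct [Fintype ι] (hu : u ^ k = 0) (hv : v ^ m = 0)
    (hB : ∀ p, B p = u ^ (p.1 : ℕ) * v ^ (p.2 : ℕ)) (a b : ι → R) :
    grayMap B a ⬝ᵥ grayMap B b = B.sumCoords (a ⬝ᵥ b) := by
  simp only [dotProduct, map_sum, ← symbolGrayMap_dotProduct hu hv hB, grayMap_apply,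
    Fintype.sum_prod_type]
  exact (sum_congr rfl fun _ _ => sum_comm).trans sum_comm

end MonomialBasis

theorem Rkm.u_pow_eq_zero (k m : ℕ) : Rkm.u k m ^ k = 0 := by
  rw [Rkm.u, ← map_pow, Ideal.Quotient.eq_zero_iff_mem]
  exact Ideal.subset_span (by simp)

theorem Rkm.v_pow_eq_zero (k m : ℕ) : Rkm.v k m ^ m = 0 := by
  rw [Rkm.v, ← map_pow, Ideal.Quotient.eq_zero_iff_mem]
  exact Ideal.subset_span (by simp)

theorem grayMap_dual_Rkm_general (k m n : ℕ)
    (B : Module.Basis (Fin k × Fin m) (ZMod 2) (Rkm k m))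
    (hB : ∀ p : Fin k × Fin m, B p = Rkm.u k m ^ (p.1 : ℕ) * Rkm.v k m ^ (p.2 : ℕ))
    (φ : (Fin n → Rkm k m) → (Fin m × Fin k × Fin n → ZMod 2))
    (hφ : ∀ a : Fin n → Rkm k m, ∀ q : Fin m × Fin k × Fin n,
      φ a q = ∑ j ∈ grayInterval m q.1, ∑ i ∈ grayInterval k q.2.1, B.repr (a q.2.2) (i, j))
    (C : Submodule (Rkm k m) (Fin n → Rkm k m)) :
    Function.Injective φ ∧
    (∀ x y : Fin n → Rkm k m, φ (x + y) = φ x + φ y) ∧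
    φ '' {b : Fin n → Rkm k m | ∀ a ∈ C, ∑ j, a j * b j = 0} =
      {w : Fin m × Fin k × Fin n → ZMod 2 |
        ∀ x ∈ φ '' (C : Set (Fin n → Rkm k m)), ∑ q, x q * w q = 0} ∧
    ((C : Set (Fin n → Rkm k m)) = {b : Fin n → Rkm k m | ∀ a ∈ C, ∑ j, a j * b j = 0} →
      φ '' (C : Set (Fin n → Rkm k m)) =
        {w : Fin m × Fin k × Fin n → ZMod 2 |
          ∀ x ∈ φ '' (C : Set (Fin n → Rkm k m)), ∑ q, x q * w q = 0} ∧
      ∀ w : ℕ,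
        Set.ncard {c ∈ (C : Set (Fin n → Rkm k m)) | hammingNorm (φ c) = w} =
          Set.ncard {x ∈ φ '' (C : Set (Fin n → Rkm k m)) | hammingNorm x = w}) := by
  obtain rfl : φ = grayMap B :=
    funext₂ fun a q => by rw [hφ, grayMap_apply, symbolGrayMap_apply]
  have hσ := fun x => eq_zero_of_forall_sumCoords_mul_eq_zero (x := x) (Rkm.u_pow_eq_zero k m)
    (Rkm.v_pow_eq_zero k m) hB
  have hΦ := grayMap_dotProduct (ι := Fin n) (Rkm.u_pow_eq_zero k m) (Rkm.v_pow_eq_zero k m) hB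
  have : FiniteDimensional (ZMod 2) (Rkm k m) := Module.Finite.of_basis B
  have hdim : finrank (ZMod 2) (Fin n → Rkm k m) = Fintype.card (Fin m × Fin k × Fin n) := by
    simp only [finrank_pi_fintype, finrank_eq_card_basis B, Fintype.card_prod, Fintype.card_fin,
      sum_const, card_univ, smul_eq_mul]
    ring
  have hinj := injective_of_dotProduct_map_eq hσ hΦ
  have hdual := image_orthogonal_eq_orthogonal_image hσ hΦ hdim C
  refine ⟨hinj, map_add _, hdual, fun hself => ⟨hself ▸ hdual, fun w => ?_⟩⟩
  rw [← Set.ncard_image_of_injective _ hinj]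
  exact congrArg Set.ncard (Set.image_inter_preimage _ _ {x | hammingNorm x = w})

/-- The Gray map `φ_{km} : R_{k,m}^n → F_2^{kmn}` (with coefficients taken w.r.t. the basis
`u^i v^j`, output blocks indexed by `Fin m × Fin k`) is injective and `F_2`-linear, satisfies
`φ_{km}(C^⊥) = φ_{km}(C)^⊥`, and in particular maps a self-dual code `C` of length `n` over
`R_{k,m}` to a binary self-dual code of length `kmn` whose Hamming weight distribution equals
the Lee weight distribution of `C` (the Lee weight being `w_L(c) = w_H(φ_{km}(c))`). -/
theorem grayMap_dual_Rkm (k m n : ℕ) (hk : 1 ≤ k) (hm : 1 ≤ m) (hn : 1 ≤ n)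
    (B : Module.Basis (Fin k × Fin m) (ZMod 2) (Rkm k m))
    (hB : ∀ p : Fin k × Fin m, B p = Rkm.u k m ^ (p.1 : ℕ) * Rkm.v k m ^ (p.2 : ℕ))
    (φ : (Fin n → Rkm k m) → (Fin m × Fin k × Fin n → ZMod 2))
    (hφ : ∀ a : Fin n → Rkm k m, ∀ q : Fin m × Fin k × Fin n,
      φ a q = ∑ j ∈ grayInterval m q.1, ∑ i ∈ grayInterval k q.2.1, B.repr (a q.2.2) (i, j))
    (C : Submodule (Rkm k m) (Fin n → Rkm k m)) :
    Function.Injective φ ∧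
    (∀ x y : Fin n → Rkm k m, φ (x + y) = φ x + φ y) ∧
    φ '' {b : Fin n → Rkm k m | ∀ a ∈ C, ∑ j, a j * b j = 0} =
      {w : Fin m × Fin k × Fin n → ZMod 2 |
        ∀ x ∈ φ '' (C : Set (Fin n → Rkm k m)), ∑ q, x q * w q = 0} ∧
    ((C : Set (Fin n → Rkm k m)) = {b : Fin n → Rkm k m | ∀ a ∈ C, ∑ j, a j * b j = 0} →
      φ '' (C : Set (Fin n → Rkm k m)) =
        {w : Fin m × Fin k × Fin n → ZMod 2 |
          ∀ x ∈ φ '' (C : Set (Fin n → Rkm k m)), ∑ q, x q * w q = 0} ∧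
      ∀ w : ℕ,
        Set.ncard {c ∈ (C : Set (Fin n → Rkm k m)) | hammingNorm (φ c) = w} =
          Set.ncard {x ∈ φ '' (C : Set (Fin n → Rkm k m)) | hammingNorm x = w}) :=
  grayMap_dual_Rkm_general k m n B hB φ hφ C
end

section
/- Let k ≥ 1, m ≥ 1 and n ≥ 1 be integers and let C be a linear code of length n over R_{k,m}. Then for every real number z, |C| · Σ_{b ∈ C^⊥} z^{w_L(b)} = Σ_{c ∈ C} (1 - z)^{w_L(c)} · (1 + z)^{kmn - w_L(c)} (MacWilliams identity for Lee weight enumerators over R_{k,m}; equivalently Lee_{C^⊥}(z) = |C|^{-1} (1+z)^{kmn} Lee_C((1-z)/(1+z)) for z ≠ -1). -/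
open MvPolynomial

set_option synthInstance.maxHeartbeats 1000000
set_option maxHeartbeats 1000000

/-!
The Gray coordinates form an `𝔽₂`-linear bijection `ψ : R_{k,m} → 𝔽₂^{km}` that turns the form
`(a, b) ↦ T(ab)`, where `T` sums all coordinates in the monomial basis `uⁱvʲ`, into the dot
product: the number of Gray intervals containing both `i` and `i'` is odd exactly when
`i + i' < k`, i.e. when `uⁱ·uⁱ' ≠ 0`. The form is nondegenerate (pair a minimal monomial of `a`
with its complement), so `c ↦ (-1)^{T(c·b)}` is a character of `C` that is trivial exactly when
`b ∈ C^⊥`, and its sum over `C` is `|C|` or `0`. On the other hand, expanding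
`(1-z)^{w_L(c)} (1+z)^{kmn - w_L(c)}` coordinatewise gives the binary character sum
`∑_y (-1)^{ψ(c)·y} z^{w_H(y)}`, which pulls back along `ψ` to a sum over `b ∈ R_{k,m}^n`.
Exchanging the two sums gives the identity.
-/

lemma ZMod.two_eq_zero_or_one (x : ZMod 2) : x = 0 ∨ x = 1 := by
  revert x; decide

def signChar : AddChar (ZMod 2) ℝ where
  toFun x := if x = 0 then 1 else -1
  map_zero_eq_one' := rfl
  map_add_eq_mul' a b := by
    rcases a.two_eq_zero_or_one with rfl | rfl <;> rcases b.two_eq_zero_or_one with rfl | rfl <;>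
      simp [show (1 + 1 : ZMod 2) = 0 from rfl]

lemma signChar_apply (x : ZMod 2) : signChar x = if x = 0 then 1 else -1 := rfl

lemma signChar_eq_one_iff (x : ZMod 2) : signChar x = 1 ↔ x = 0 := by
  rcases x.two_eq_zero_or_one with rfl | rfl <;> norm_num [signChar_apply]

lemma AddChar.map_sum_eq_prod {A M ι : Type*} [AddCommMonoid A] [CommMonoid M] (ψ : AddChar A M)
    (s : Finset ι) (f : ι → A) : ψ (∑ i ∈ s, f i) = ∏ i ∈ s, ψ (f i) := by
  induction s using Finset.cons_induction with
  | empty => simp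
  | cons i s hi ih => rw [Finset.sum_cons, Finset.prod_cons, AddChar.map_add_eq_mul, ih]

lemma pow_hammingNorm_eq_prod {ι M R : Type*} [Fintype ι] [Zero M] [DecidableEq M] [CommMonoid R]
    (y : ι → M) (z : R) : z ^ hammingNorm y = ∏ q, if y q = 0 then 1 else z := by
  rw [Finset.prod_ite, Finset.prod_const_one, one_mul, Finset.prod_const]
  rfl

lemma hammingNorm_eq_sum_hammingNorm {α β γ M : Type*} [Fintype α] [Fintype β] [Fintype γ]
    [Zero M] [DecidableEq M] (x : γ → α × β → M) :
    hammingNorm (fun q : α × β × γ => x q.2.2 (q.1, q.2.1)) = ∑ i, hammingNorm (x i) := by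
  simp only [hammingNorm, Finset.card_filter, Fintype.sum_prod_type]
  exact (Finset.sum_congr rfl fun _ _ => Finset.sum_comm).trans Finset.sum_comm

lemma sum_signChar_mul_ite (a : ZMod 2) (z : ℝ) :
    ∑ s : ZMod 2, signChar (a * s) * (if s = 0 then 1 else z) = if a = 0 then 1 + z else 1 - z := by
  rw [show (Finset.univ : Finset (ZMod 2)) = {0, 1} from rfl, Finset.sum_pair zero_ne_one]
  rcases a.two_eq_zero_or_one with rfl | rfl <;> simp [signChar_apply]; ring

open Finset in
lemma sum_signChar_dotProduct_mul_pow_hammingNorm {ι : Type*} [Fintype ι] [DecidableEq ι]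
    (w : ι → ZMod 2) (z : ℝ) :
    ∑ y : ι → ZMod 2, signChar (w ⬝ᵥ y) * z ^ hammingNorm y
      = (1 - z) ^ hammingNorm w * (1 + z) ^ (Fintype.card ι - hammingNorm w) := by
  calc ∑ y : ι → ZMod 2, signChar (w ⬝ᵥ y) * z ^ hammingNorm y
      = ∑ y : ι → ZMod 2, ∏ q, signChar (w q * y q) * (if y q = 0 then 1 else z) := by
        simp only [dotProduct, AddChar.map_sum_eq_prod, pow_hammingNorm_eq_prod,
          Finset.prod_mul_distrib]
    _ = ∏ q, (if w q = 0 then 1 + z else 1 - z) := by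
        rw [← Fintype.prod_sum (fun q s => signChar (w q * s) * if s = 0 then 1 else z)]
        exact Finset.prod_congr rfl fun q _ => sum_signChar_mul_ite (w q) z
    _ = (1 - z) ^ hammingNorm w * (1 + z) ^ (Fintype.card ι - hammingNorm w) := by
        have hcard := card_filter_add_card_filter_not (s := univ) (fun q => w q = 0)
        rw [prod_ite, prod_const, prod_const, mul_comm, card_univ] at *
        have hw : hammingNorm w = #{q | ¬ w q = 0} := rfl
        congr 2; omega

def grayWeight {R ι : Type*} [Fintype ι] {n : ℕ} (ψ : R → ι → ZMod 2) (c : Fin n → R) : ℕ :=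
  ∑ i, hammingNorm (ψ (c i))

section GeneratingCharacter

variable {R ι : Type*} [CommRing R] [Fintype ι] {T : R →+ ZMod 2} {ψ : R →+ (ι → ZMod 2)}

lemma injective_of_dotProduct_eq (hT : ∀ a : R, a ≠ 0 → ∃ b, T (a * b) ≠ 0)
    (hψ : ∀ a b, ψ a ⬝ᵥ ψ b = T (a * b)) : Function.Injective ψ := by
  refine (injective_iff_map_eq_zero ψ).2 fun a ha => ?_
  by_contra ha0
  obtain ⟨b, hb⟩ := hT a ha0
  exact hb (by rw [← hψ, ha, zero_dotProduct])

lemma bijective_of_dotProduct_eq [Fintype R] [DecidableEq ι]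
    (hT : ∀ a : R, a ≠ 0 → ∃ b, T (a * b) ≠ 0) (hψ : ∀ a b, ψ a ⬝ᵥ ψ b = T (a * b))
    (hcard : Fintype.card R = 2 ^ Fintype.card ι) : Function.Bijective ψ := by
  rw [Fintype.bijective_iff_injective_and_card]
  exact ⟨injective_of_dotProduct_eq hT hψ, by simp [hcard]⟩

lemma sum_signChar_mul_pow_hammingNorm [Fintype R] [DecidableEq ι]
    (hψ : ∀ a b, ψ a ⬝ᵥ ψ b = T (a * b)) (hbij : Function.Bijective ψ) (z : ℝ) (a : R) :
    ∑ b, signChar (T (a * b)) * z ^ hammingNorm (ψ b)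
      = (1 - z) ^ hammingNorm (ψ a) * (1 + z) ^ (Fintype.card ι - hammingNorm (ψ a)) := by
  rw [← sum_signChar_dotProduct_mul_pow_hammingNorm]
  exact Fintype.sum_bijective ψ hbij _ _ fun b => by rw [hψ]

lemma pow_grayWeight_mul_pow_eq_sum [Fintype R] [DecidableEq ι] {n : ℕ}
    (hψ : ∀ a b, ψ a ⬝ᵥ ψ b = T (a * b)) (hbij : Function.Bijective ψ) (z : ℝ) (c : Fin n → R) :
    (1 - z) ^ grayWeight ψ c * (1 + z) ^ (Fintype.card ι * n - grayWeight ψ c)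
      = ∑ b : Fin n → R, signChar (T (c ⬝ᵥ b)) * z ^ grayWeight ψ b := by
  have hsub : Fintype.card ι * n - grayWeight ψ c
      = ∑ i, (Fintype.card ι - hammingNorm (ψ (c i))) := by
    rw [grayWeight, Finset.sum_tsub_distrib _ fun i _ => hammingNorm_le_card_fintype]
    simp [mul_comm]
  calc (1 - z) ^ grayWeight ψ c * (1 + z) ^ (Fintype.card ι * n - grayWeight ψ c)
      = ∏ i, ∑ b, signChar (T (c i * b)) * z ^ hammingNorm (ψ b) := by
        rw [hsub]
        simp only [sum_signChar_mul_pow_hammingNorm hψ hbij, Finset.prod_mul_distrib,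
          Finset.prod_pow_eq_pow_sum, grayWeight]
    _ = ∑ b : Fin n → R, signChar (T (c ⬝ᵥ b)) * z ^ grayWeight ψ b := by
        rw [Fintype.prod_sum]
        simp only [dotProduct, map_sum, AddChar.map_sum_eq_prod, grayWeight,
          ← Finset.prod_pow_eq_pow_sum, Finset.prod_mul_distrib]

open Classical in
lemma sum_signChar_dotProduct_submodule_eq_ite (hT : ∀ a : R, a ≠ 0 → ∃ b, T (a * b) ≠ 0)
    {n : ℕ} (C : Submodule R (Fin n → R)) [Fintype C] (b : Fin n → R) :
    ∑ c : C, signChar (T ((c : Fin n → R) ⬝ᵥ b))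
      = if ∀ a ∈ C, a ⬝ᵥ b = 0 then (Fintype.card C : ℝ) else 0 := by
  let χ : AddChar C ℝ := signChar.compAddMonoidHom
    (T.comp ((AddMonoidHom.mk' (· ⬝ᵥ b) fun x y => add_dotProduct x y b).comp
      C.subtype.toAddMonoidHom))
  have hχ : χ = 0 ↔ ∀ a ∈ C, a ⬝ᵥ b = 0 := by
    simp only [AddChar.eq_zero_iff, χ, AddChar.compAddMonoidHom_apply, signChar_eq_one_iff,
      AddMonoidHom.coe_comp, Function.comp_apply, AddMonoidHom.mk'_apply,
      LinearMap.toAddMonoidHom_coe, Submodule.coe_subtype, Subtype.forall]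
    refine ⟨fun h a ha => ?_, fun h a ha => by rw [h a ha, map_zero]⟩
    by_contra hab
    obtain ⟨r, hr⟩ := hT _ hab
    exact hr (by simpa [smul_dotProduct, mul_comm] using h (r • a) (C.smul_mem r ha))
  change ∑ c, χ c = _
  rw [AddChar.sum_eq_ite]
  exact if_congr hχ rfl rfl

theorem card_mul_finsum_dual_pow_grayWeight [Fintype R] [DecidableEq ι]
    (hT : ∀ a : R, a ≠ 0 → ∃ b, T (a * b) ≠ 0) (hψ : ∀ a b, ψ a ⬝ᵥ ψ b = T (a * b))
    (hcard : Fintype.card R = 2 ^ Fintype.card ι) {n : ℕ} (C : Submodule R (Fin n → R))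
    (z : ℝ) :
    (Nat.card C : ℝ) * ∑ᶠ b ∈ {b : Fin n → R | ∀ a ∈ C, a ⬝ᵥ b = 0}, z ^ grayWeight ψ b
      = ∑ᶠ c ∈ (C : Set (Fin n → R)),
          (1 - z) ^ grayWeight ψ c * (1 + z) ^ (Fintype.card ι * n - grayWeight ψ c) := by
  classical
  have hbij := bijective_of_dotProduct_eq hT hψ hcard
  rw [finsum_mem_eq_toFinset_sum, Set.toFinset_ofPred, Finset.sum_filter, Finset.mul_sum,
    ← finsum_set_coe_eq_finsum_mem, finsum_eq_sum_of_fintype, Nat.card_eq_fintype_card]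
  simp only [SetLike.coe_sort_coe, pow_grayWeight_mul_pow_eq_sum hψ hbij]
  rw [Finset.sum_comm]
  refine Finset.sum_congr rfl fun b _ => ?_
  rw [← Finset.sum_mul, sum_signChar_dotProduct_submodule_eq_ite hT, mul_ite, mul_zero, ite_mul,
    zero_mul]
  -- the two sides differ only in their `Decidable` instances
  congr 1

end GeneratingCharacter

lemma mem_grayInterval_iff {k : ℕ} {t i : Fin k} :
    i ∈ grayInterval k t ↔ (t : ℕ) ≤ 2 * i ∧ (t : ℕ) < 2 * (k - i) := by
  simp only [grayInterval, Finset.mem_filter, Finset.mem_univ, true_and]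
  omega

open Finset in
/-- The `t` with `i, i' ∈ I_t` form an initial segment of length
`min (2 min(i,i') + 1, 2 (k - max(i,i')), k)`, which is odd exactly when `i + i' < k`. -/
lemma sum_grayInterval_indicator_mul (k : ℕ) (i i' : Fin k) :
    ∑ t, (if i ∈ grayInterval k t then (1 : ZMod 2) else 0) *
        (if i' ∈ grayInterval k t then 1 else 0)
      = if (i : ℕ) + i' < k then 1 else 0 := by
  have hfilter : ({t | i ∈ grayInterval k t ∧ i' ∈ grayInterval k t} : Finset (Fin k))
      = ({t | (t : ℕ) < min (2 * min (i : ℕ) i' + 1) (2 * (k - max (i : ℕ) i'))} :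
          Finset (Fin k)) := by
    ext t
    simp only [mem_filter, mem_univ, true_and, mem_grayInterval_iff]
    omega
  simp only [ite_zero_mul_ite_zero, one_mul, sum_boole, hfilter, Fin.card_filter_val_lt]
  rw [← ZMod.natCast_mod]
  have := i.isLt
  have := i'.isLt
  split_ifs <;> [rw [show _ % 2 = 1 by omega]; rw [show _ % 2 = 0 by omega]] <;> simp

namespace Rkm

lemma u_pow_self (k m : ℕ) : u k m ^ k = 0 := by
  rw [u, ← map_pow, Ideal.Quotient.eq_zero_iff_mem]
  exact Ideal.subset_span (by simp)

lemma v_pow_self (k m : ℕ) : v k m ^ m = 0 := by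
  rw [v, ← map_pow, Ideal.Quotient.eq_zero_iff_mem]
  exact Ideal.subset_span (by simp)

section Basis

variable {k m : ℕ} (B : Module.Basis (Fin k × Fin m) (ZMod 2) (Rkm k m))

noncomputable def coeffSum : Rkm k m →ₗ[ZMod 2] ZMod 2 := ∑ p, B.coord p

lemma coeffSum_apply (a : Rkm k m) : coeffSum B a = ∑ p, B.repr a p := by
  simp [coeffSum]

noncomputable def grayCoord (q : Fin m × Fin k) : Rkm k m →ₗ[ZMod 2] ZMod 2 :=
  ∑ j ∈ grayInterval m q.1, ∑ i ∈ grayInterval k q.2, B.coord (i, j)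

lemma grayCoord_apply (q : Fin m × Fin k) (a : Rkm k m) :
    grayCoord B q a = ∑ j ∈ grayInterval m q.1, ∑ i ∈ grayInterval k q.2, B.repr a (i, j) := by
  simp [grayCoord]

lemma grayCoord_basis (q : Fin m × Fin k) (p : Fin k × Fin m) :
    grayCoord B q (B p) = (if p.2 ∈ grayInterval m q.1 then 1 else 0) *
      (if p.1 ∈ grayInterval k q.2 then 1 else 0) := by
  rw [← Finset.sum_ite_eq (grayInterval m q.1) p.2 fun _ => 1,
    ← Finset.sum_ite_eq (grayInterval k q.2) p.1 fun _ => 1, Finset.sum_mul_sum]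
  simp only [grayCoord_apply, Module.Basis.repr_self, Finsupp.single_apply, Prod.ext_iff,
    ite_zero_mul_ite_zero, mul_one, and_comm]

variable {B}

lemma coeffSum_basis_mul_basis
    (hB : ∀ p : Fin k × Fin m, B p = u k m ^ (p.1 : ℕ) * v k m ^ (p.2 : ℕ))
    (p p' : Fin k × Fin m) :
    coeffSum B (B p * B p')
      = if (p.1 : ℕ) + p'.1 < k ∧ (p.2 : ℕ) + p'.2 < m then 1 else 0 := by
  have hprod : B p * B p' = u k m ^ ((p.1 : ℕ) + p'.1) * v k m ^ ((p.2 : ℕ) + p'.2) := by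
    rw [hB p, hB p', mul_mul_mul_comm, ← pow_add, ← pow_add]
  split_ifs with h
  · rw [hprod, ← hB (⟨_, h.1⟩, ⟨_, h.2⟩), coeffSum_apply]
    simp
  · rw [hprod]
    rcases not_and_or.mp h with h | h
    · rw [← Nat.add_sub_cancel' (not_lt.mp h), pow_add (u k m), u_pow_self]
      simp
    · rw [← Nat.add_sub_cancel' (not_lt.mp h), pow_add (v k m), v_pow_self]
      simp

lemma sum_grayCoord_basis_mul_grayCoord_basis (p p' : Fin k × Fin m) :
    ∑ q, grayCoord B q (B p) * grayCoord B q (B p')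
      = if (p.1 : ℕ) + p'.1 < k ∧ (p.2 : ℕ) + p'.2 < m then 1 else 0 := by
  calc ∑ q, grayCoord B q (B p) * grayCoord B q (B p')
      = (∑ j, (if p.2 ∈ grayInterval m j then 1 else 0) *
            (if p'.2 ∈ grayInterval m j then 1 else 0)) *
          ∑ i, (if p.1 ∈ grayInterval k i then 1 else 0) *
            (if p'.1 ∈ grayInterval k i then 1 else 0) := by
        simp only [grayCoord_basis, Fintype.sum_prod_type, Finset.sum_mul_sum, mul_mul_mul_comm]
    _ = _ := by
        rw [sum_grayInterval_indicator_mul, sum_grayInterval_indicator_mul, ite_zero_mul_ite_zero,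
          one_mul]
        exact if_congr and_comm rfl rfl

lemma sum_grayCoord_mul_grayCoord
    (hB : ∀ p : Fin k × Fin m, B p = u k m ^ (p.1 : ℕ) * v k m ^ (p.2 : ℕ)) (a b : Rkm k m) :
    ∑ q, grayCoord B q a * grayCoord B q b = coeffSum B (a * b) := by
  have hbilin : ∑ q, (LinearMap.mul (ZMod 2) (ZMod 2)).compl₁₂ (grayCoord B q) (grayCoord B q)
      = (LinearMap.mul (ZMod 2) (Rkm k m)).compr₂ (coeffSum B) := by
    refine B.ext fun p => B.ext fun p' => ?_
    simp only [LinearMap.sum_apply, LinearMap.compl₁₂_apply, LinearMap.compr₂_apply,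
      LinearMap.mul_apply']
    rw [sum_grayCoord_basis_mul_grayCoord_basis, coeffSum_basis_mul_basis hB]
  simpa using LinearMap.congr_fun₂ hbilin a b

open Finset in
lemma coeffSum_mul_basis_rev
    (hB : ∀ p : Fin k × Fin m, B p = u k m ^ (p.1 : ℕ) * v k m ^ (p.2 : ℕ))
    (a : Rkm k m) (p : Fin k × Fin m) :
    coeffSum B (a * B (p.1.rev, p.2.rev)) = ∑ p' with p' ≤ p, B.repr a p' := by
  conv_lhs => rw [← B.sum_repr a]
  rw [Finset.sum_mul, map_sum, Finset.sum_filter]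
  refine Finset.sum_congr rfl fun p' _ => ?_
  rw [smul_mul_assoc, map_smul, coeffSum_basis_mul_basis hB, smul_eq_mul, mul_ite, mul_one,
    mul_zero]
  refine if_congr ?_ rfl rfl
  simp only [Fin.val_rev, Prod.le_def, Fin.le_def]
  omega

lemma exists_coeffSum_mul_ne_zero
    (hB : ∀ p : Fin k × Fin m, B p = u k m ^ (p.1 : ℕ) * v k m ^ (p.2 : ℕ))
    (a : Rkm k m) (ha : a ≠ 0) : ∃ b, coeffSum B (a * b) ≠ 0 := by
  have hsupp : ∃ p, B.repr a p ≠ 0 := by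
    by_contra! h
    exact ha (B.repr.map_eq_zero_iff.mp (Finsupp.ext h))
  obtain ⟨p, hp⟩ := exists_minimal_of_wellFoundedLT _ hsupp
  refine ⟨B (p.1.rev, p.2.rev), ?_⟩
  rw [coeffSum_mul_basis_rev hB, Finset.sum_eq_single_of_mem p (by simp)]
  · exact hp.prop
  · intro p' hp' hne
    by_contra h
    exact hne (hp.eq_of_le h (Finset.mem_filter.mp hp').2)

end Basis

end Rkm

theorem Rkm_macwilliams_lee_general (k m n : ℕ)
    (B : Module.Basis (Fin k × Fin m) (ZMod 2) (Rkm k m))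
    (hB : ∀ p : Fin k × Fin m, B p = Rkm.u k m ^ (p.1 : ℕ) * Rkm.v k m ^ (p.2 : ℕ))
    (φ : (Fin n → Rkm k m) → (Fin m × Fin k × Fin n → ZMod 2))
    (hφ : ∀ a : Fin n → Rkm k m, ∀ q : Fin m × Fin k × Fin n,
      φ a q = ∑ j ∈ grayInterval m q.1, ∑ i ∈ grayInterval k q.2.1, B.repr (a q.2.2) (i, j))
    (wL : (Fin n → Rkm k m) → ℕ) (hwL : ∀ c : Fin n → Rkm k m, wL c = hammingNorm (φ c))
    (C : Submodule (Rkm k m) (Fin n → Rkm k m)) (z : ℝ) :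
    (Nat.card C : ℝ) *
      ∑ᶠ b ∈ {b : Fin n → Rkm k m | ∀ a ∈ C, ∑ i, a i * b i = 0}, z ^ wL b =
    ∑ᶠ c ∈ (C : Set (Fin n → Rkm k m)),
      (1 - z) ^ wL c * (1 + z) ^ (k * m * n - wL c) := by
  let _ : Fintype (Rkm k m) := Module.fintypeOfFintype B
  let ψ := (LinearMap.pi (Rkm.grayCoord B)).toAddMonoidHom
  have hwL_eq : wL = grayWeight ψ := funext fun c => by
    rw [hwL, grayWeight, ← hammingNorm_eq_sum_hammingNorm]
    congr with q
    exact (hφ c q).trans (Rkm.grayCoord_apply B (q.1, q.2.1) (c q.2.2)).symm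
  have hcard : Fintype.card (Rkm k m) = 2 ^ Fintype.card (Fin m × Fin k) := by
    simp [Module.card_fintype B, mul_comm]
  have hkmn : k * m * n = Fintype.card (Fin m × Fin k) * n := by simp [mul_comm k]
  rw [hwL_eq, hkmn]
  exact card_mul_finsum_dual_pow_grayWeight (T := (Rkm.coeffSum B).toAddMonoidHom) (ψ := ψ)
    (Rkm.exists_coeffSum_mul_ne_zero hB) (Rkm.sum_grayCoord_mul_grayCoord hB) hcard C z

/-- MacWilliams identity for the Lee weight enumerators of a linear code over `R_{k,m}` and
its dual: `|C| · Lee_{C^⊥}(z) = Σ_{c ∈ C} (1-z)^{w_L(c)} (1+z)^{kmn - w_L(c)}`, where the Lee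
weight `w_L(c) = w_H(φ_{km}(c))` is the Hamming weight of the Gray image. -/
theorem Rkm_macwilliams_lee (k m n : ℕ) (hk : 1 ≤ k) (hm : 1 ≤ m) (hn : 1 ≤ n)
    (B : Module.Basis (Fin k × Fin m) (ZMod 2) (Rkm k m))
    (hB : ∀ p : Fin k × Fin m, B p = Rkm.u k m ^ (p.1 : ℕ) * Rkm.v k m ^ (p.2 : ℕ))
    (φ : (Fin n → Rkm k m) → (Fin m × Fin k × Fin n → ZMod 2))
    (hφ : ∀ a : Fin n → Rkm k m, ∀ q : Fin m × Fin k × Fin n,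
      φ a q = ∑ j ∈ grayInterval m q.1, ∑ i ∈ grayInterval k q.2.1, B.repr (a q.2.2) (i, j))
    (wL : (Fin n → Rkm k m) → ℕ) (hwL : ∀ c : Fin n → Rkm k m, wL c = hammingNorm (φ c))
    (C : Submodule (Rkm k m) (Fin n → Rkm k m)) (z : ℝ) :
    (Nat.card C : ℝ) *
      ∑ᶠ b ∈ {b : Fin n → Rkm k m | ∀ a ∈ C, ∑ i, a i * b i = 0}, z ^ wL b =
    ∑ᶠ c ∈ (C : Set (Fin n → Rkm k m)),
      (1 - z) ^ wL c * (1 + z) ^ (k * m * n - wL c) :=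
  Rkm_macwilliams_lee_general k m n B hB φ hφ wL hwL C z
end

section
/- Let k ≥ 1, m ≥ 1 and n ≥ 1 be integers, let C be a linear code of length n over R_{k,m}, and let χ : R_{k,m} → ℂ be any additive character (χ(x+y) = χ(x)χ(y) for all x,y and χ(0) = 1) whose restriction to every nonzero ideal of R_{k,m} is nontrivial. Then for every family of complex numbers (X_g)_{g ∈ R_{k,m}}: |C| · Σ_{b ∈ C^⊥} Π_{i=1}^{n} X_{b_i} = Σ_{c ∈ C} Π_{i=1}^{n} ( Σ_{g ∈ R_{k,m}} χ(c_i · g) · X_g ) (MacWilliams identity for complete weight enumerators over R_{k,m}). -/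
open MvPolynomial

set_option synthInstance.maxHeartbeats 1000000
set_option maxHeartbeats 1000000

/-!
Expanding the products, the right-hand side is `Σ_b (Σ_{c ∈ C} χ(c ⬝ b)) Π_i X_{b_i}`. For
fixed `b`, `c ↦ χ(c ⬝ b)` is an additive character of the finite group `C`. It is trivial exactly
when `b ∈ C^⊥`: otherwise `{c ⬝ b | c ∈ C}` is a nonzero ideal, on which `χ` is nontrivial. By
orthogonality of characters the inner sum is therefore `|C|` on `C^⊥` and `0` off it.
-/

theorem MvPolynomial.finite_quotient_of_pow_X_mem {σ K : Type*} [Finite σ] [CommRing K]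
    [Finite K] (I : Ideal (MvPolynomial σ K)) (hI : ∀ i, ∃ k, X i ^ k ∈ I) :
    Finite (MvPolynomial σ K ⧸ I) := by
  let f := Ideal.Quotient.mkₐ K I
  have hX : Algebra.adjoin K (f '' Set.range X) = ⊤ := by
    rw [← AlgHom.map_adjoin, adjoin_range_X, Algebra.map_top, AlgHom.range_eq_top]
    exact Ideal.Quotient.mkₐ_surjective K I
  have hint : ∀ x ∈ f '' Set.range X, IsIntegral K x := by
    rintro _ ⟨_, ⟨i, rfl⟩, rfl⟩
    obtain ⟨k, hk⟩ := hI i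
    refine ⟨Polynomial.X ^ k, Polynomial.monic_X_pow k, ?_⟩
    rw [Polynomial.eval₂_X_pow, ← map_pow]
    exact Ideal.Quotient.eq_zero_iff_mem.2 hk
  have hfg := fg_adjoin_of_finite ((Set.finite_range X).image f) hint
  rw [hX] at hfg
  have : Module.Finite K (MvPolynomial σ K ⧸ I) := ⟨hfg⟩
  exact Module.finite_of_finite K

namespace AddChar

lemma map_sum_eq_prod_s11 {A M ι : Type*} [AddCommMonoid A] [CommMonoid M] (ψ : AddChar A M)
    (s : Finset ι) (f : ι → A) : ψ (∑ i ∈ s, f i) = ∏ i ∈ s, ψ (f i) := by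
  induction s using Finset.cons_induction with
  | empty => simp
  | cons a s ha ih => rw [Finset.sum_cons, Finset.prod_cons, map_add_eq_mul, ih]

lemma isPrimitive_of_forall_ideal_ne_bot {R M : Type*} [CommRing R] [CommMonoid M]
    {ψ : AddChar R M} (h : ∀ I : Ideal R, I ≠ ⊥ → ∃ x ∈ I, ψ x ≠ 1) : ψ.IsPrimitive := by
  intro a ha hshift
  obtain ⟨x, hx, hψx⟩ := h (Ideal.span {a}) (by simpa using ha)
  obtain ⟨r, rfl⟩ := Ideal.mem_span_singleton'.1 hx
  exact hψx (by simpa [mul_comm] using DFunLike.congr_fun hshift r)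

end AddChar

variable {R ι M : Type*} [CommRing R] [Fintype ι]

lemma AddChar.prod_sum_mul_eq_sum_dotProduct [CommSemiring M] [Fintype R] [DecidableEq ι]
    (ψ : AddChar R M) (w : R → M) (c : ι → R) :
    ∏ i, ∑ g, ψ (c i * g) * w g = ∑ b : ι → R, ψ (c ⬝ᵥ b) * ∏ i, w (b i) := by
  rw [Fintype.prod_sum]
  refine Fintype.sum_congr _ _ fun b => ?_
  rw [dotProduct, ψ.map_sum_eq_prod_s11, Finset.prod_mul_distrib]

theorem Submodule.sum_addChar_dotProduct_eq_ite [CommRing M] [IsDomain M] {ψ : AddChar R M}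
    (hψ : ψ.IsPrimitive) (C : Submodule R (ι → R)) [Fintype C] (b : ι → R)
    [Decidable (∀ a ∈ C, a ⬝ᵥ b = 0)] :
    ∑ c : C, ψ ((c : ι → R) ⬝ᵥ b) = if ∀ a ∈ C, a ⬝ᵥ b = 0 then (Fintype.card C : M) else 0 := by
  let φ : AddChar C M :=
    ψ.compAddMonoidHom ((dotProductBilin R R).flip b ∘ₗ C.subtype).toAddMonoidHom
  have hφ : φ = 0 ↔ ∀ a ∈ C, a ⬝ᵥ b = 0 := by
    constructor
    · intro h a ha
      by_contra hab
      apply hψ hab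
      ext r
      simpa [φ, smul_dotProduct, mul_comm] using DFunLike.congr_fun h ⟨r • a, C.smul_mem r ha⟩
    · intro h
      ext c
      simp [φ, h c c.2]
  classical
  exact φ.sum_eq_ite.trans (if_congr hφ rfl rfl)

theorem Submodule.card_mul_sum_dual_eq_sum_prod [Finite R] [CommRing M] [IsDomain M]
    {ψ : AddChar R M} (hψ : ψ.IsPrimitive) (C : Submodule R (ι → R)) (w : R → M) :
    (Nat.card C : M) * ∑ᶠ b ∈ {b : ι → R | ∀ a ∈ C, a ⬝ᵥ b = 0}, ∏ i, w (b i) =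
      ∑ᶠ c ∈ (C : Set (ι → R)), ∏ i, ∑ᶠ g, ψ (c i * g) * w g := by
  classical
  have := Fintype.ofFinite R
  rw [finsum_mem_eq_toFinset_sum, Set.toFinset_ofPred, Finset.sum_filter, Finset.mul_sum,
    Nat.card_eq_fintype_card, ← finsum_set_coe_eq_finsum_mem, finsum_eq_sum_of_fintype]
  simp only [finsum_eq_sum_of_fintype]
  calc ∑ b, (Fintype.card C : M) * (if ∀ a ∈ C, a ⬝ᵥ b = 0 then ∏ i, w (b i) else 0)
      = ∑ b, (∑ c : C, ψ ((c : ι → R) ⬝ᵥ b)) * ∏ i, w (b i) := by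
        simp only [C.sum_addChar_dotProduct_eq_ite hψ, mul_ite, ite_mul, mul_zero, zero_mul]
    _ = ∑ c : C, ∑ b, ψ ((c : ι → R) ⬝ᵥ b) * ∏ i, w (b i) := by
        simp only [Finset.sum_mul]
        exact Finset.sum_comm
    _ = ∑ c : C, ∏ i, ∑ g, ψ ((c : ι → R) i * g) * w g := by
        simp only [ψ.prod_sum_mul_eq_sum_dotProduct]

instance (k m : ℕ) : Finite (Rkm k m) :=
  finite_quotient_of_pow_X_mem _ fun i => by
    fin_cases i
    exacts [⟨k, Ideal.subset_span (by simp)⟩, ⟨m, Ideal.subset_span (by simp)⟩]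

theorem Rkm_macwilliams_cwe_general (k m n : ℕ)
    (C : Submodule (Rkm k m) (Fin n → Rkm k m))
    (χ : Rkm k m → ℂ)
    (hχadd : ∀ x y : Rkm k m, χ (x + y) = χ x * χ y) (hχ0 : χ 0 = 1)
    (hχgen : ∀ I : Ideal (Rkm k m), I ≠ ⊥ → ∃ x ∈ I, χ x ≠ 1)
    (Xv : Rkm k m → ℂ) :
    (Nat.card C : ℂ) *
      ∑ᶠ b ∈ {b : Fin n → Rkm k m | ∀ a ∈ C, ∑ i, a i * b i = 0}, ∏ i, Xv (b i) =
    ∑ᶠ c ∈ (C : Set (Fin n → Rkm k m)), ∏ i, ∑ᶠ g : Rkm k m, χ (c i * g) * Xv g :=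
  let ψ : AddChar (Rkm k m) ℂ := ⟨χ, hχ0, hχadd⟩
  C.card_mul_sum_dual_eq_sum_prod (ψ := ψ) (AddChar.isPrimitive_of_forall_ideal_ne_bot hχgen) Xv

/-- MacWilliams identity for the complete weight enumerators of a linear code over `R_{k,m}`
and its dual, with respect to any generating character `χ` of `R_{k,m}`:
`|C| · cwe_{C^⊥}(X) = Σ_{c ∈ C} Π_i (Σ_g χ(c_i g) X_g)`. -/
theorem Rkm_macwilliams_cwe (k m n : ℕ) (hk : 1 ≤ k) (hm : 1 ≤ m) (hn : 1 ≤ n)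
    (C : Submodule (Rkm k m) (Fin n → Rkm k m))
    (χ : Rkm k m → ℂ)
    (hχadd : ∀ x y : Rkm k m, χ (x + y) = χ x * χ y) (hχ0 : χ 0 = 1)
    (hχgen : ∀ I : Ideal (Rkm k m), I ≠ ⊥ → ∃ x ∈ I, χ x ≠ 1)
    (Xv : Rkm k m → ℂ) :
    (Nat.card C : ℂ) *
      ∑ᶠ b ∈ {b : Fin n → Rkm k m | ∀ a ∈ C, ∑ i, a i * b i = 0}, ∏ i, Xv (b i) =
    ∑ᶠ c ∈ (C : Set (Fin n → Rkm k m)), ∏ i, ∑ᶠ g : Rkm k m, χ (c i * g) * Xv g :=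
  Rkm_macwilliams_cwe_general k m n C χ hχadd hχ0 hχgen Xv
end

section
/- Let k ≥ 1, m ≥ 1 and n ≥ 1 be integers and let C be a linear code of length n over R_{k,m} whose projection μ(C) is not the zero code. Let d = min{w_L(c) : c ∈ C, c ≠ 0} be the minimum Lee weight of C and let d' = min{w_H(b) : b ∈ μ(C), b ≠ 0} be the minimum Hamming weight of μ(C). Then d ≤ 2·m·d'. -/
open MvPolynomial

set_option synthInstance.maxHeartbeats 1000000
set_option maxHeartbeats 1000000

/-!
Take a word `a ∈ C` whose projection `μ(a)` has the minimal weight `d'`, and multiply it by the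
socle generator `w = u^(k-1) v^(m-1)`. Since `w` annihilates `u` and `v`, the coordinates of
`w • a` are `μ(a_i) • w`: in the basis `u^i v^j` each has at most the single digit `(k-1, m-1)`.
The top index `k-1` lies only in the first two Gray intervals `I_1, I_2`, so every nonzero
coordinate of `a`'s projection contributes at most `2m` nonzero bits to the Gray image,
and `w • a` is a nonzero codeword of Lee weight at most `2 m d'`.
-/

theorem hammingNorm_le_card_mul_card_mul_hammingNorm {α β γ M N : Type*}
    [Fintype α] [Fintype β] [Fintype γ] [Zero M] [Zero N] [DecidableEq M] [DecidableEq N]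
    (f : α × β × γ → M) (g : γ → N) (s : Finset β)
    (hf : ∀ q, f q ≠ 0 → q.2.1 ∈ s ∧ g q.2.2 ≠ 0) :
    hammingNorm f ≤ Fintype.card α * (s.card * hammingNorm g) := by
  calc hammingNorm f
      ≤ (Finset.univ ×ˢ s ×ˢ Finset.univ.filter fun i => g i ≠ 0).card := by
        refine Finset.card_le_card fun q hq => ?_
        have := hf q (Finset.mem_filter.mp hq).2
        simp [Finset.mem_product, this]
    _ = Fintype.card α * (s.card * hammingNorm g) := by
        simp only [Finset.card_product, Finset.card_univ, hammingNorm]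

theorem val_lt_two_of_mem_grayInterval {k : ℕ} {i t : Fin k} (hi : (i : ℕ) + 1 = k)
    (h : i ∈ grayInterval k t) : (t : ℕ) < 2 := by
  simp only [grayInterval, Finset.mem_filter] at h
  omega

namespace Rkm

variable {k m : ℕ}

theorem u_pow_eq_zero_s14 {t : ℕ} (ht : k ≤ t) : u k m ^ t = 0 := by
  obtain ⟨s, rfl⟩ := Nat.exists_eq_add_of_le ht
  rw [pow_add, u, ← map_pow, Ideal.Quotient.eq_zero_iff_mem.mpr (Ideal.subset_span (by simp)),
    zero_mul]

theorem v_pow_eq_zero_s14 {t : ℕ} (ht : m ≤ t) : v k m ^ t = 0 := by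
  obtain ⟨s, rfl⟩ := Nat.exists_eq_add_of_le ht
  rw [pow_add, v, ← map_pow, Ideal.Quotient.eq_zero_iff_mem.mpr (Ideal.subset_span (by simp)),
    zero_mul]

noncomputable def socle (k m : ℕ) : Rkm k m := u k m ^ (k - 1) * v k m ^ (m - 1)

theorem socle_mul_u (hk : 1 ≤ k) (y : Rkm k m) : socle k m * (u k m * y) = 0 := by
  rw [socle, show u k m ^ (k - 1) * v k m ^ (m - 1) * (u k m * y) =
    u k m ^ (k - 1) * u k m * (v k m ^ (m - 1) * y) by ring,
    pow_sub_one_mul (by omega), u_pow_eq_zero_s14 le_rfl, zero_mul]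

theorem socle_mul_v (hm : 1 ≤ m) (y : Rkm k m) : socle k m * (v k m * y) = 0 := by
  rw [socle, show u k m ^ (k - 1) * v k m ^ (m - 1) * (v k m * y) =
    v k m ^ (m - 1) * v k m * (u k m ^ (k - 1) * y) by ring,
    pow_sub_one_mul (by omega), v_pow_eq_zero_s14 le_rfl, zero_mul]

/-- The Gray image `φ_{km}`, with coordinates indexed by `(j, i, coordinate)`. -/
noncomputable def grayImage (B : Module.Basis (Fin k × Fin m) (ZMod 2) (Rkm k m)) {n : ℕ}
    (a : Fin n → Rkm k m) (q : Fin m × Fin k × Fin n) : ZMod 2 :=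
  ∑ j ∈ grayInterval m q.1, ∑ i ∈ grayInterval k q.2.1, B.repr (a q.2.2) (i, j)

section Basis

variable (B : Module.Basis (Fin k × Fin m) (ZMod 2) (Rkm k m))
  (hB : ∀ p : Fin k × Fin m, B p = u k m ^ (p.1 : ℕ) * v k m ^ (p.2 : ℕ))
  (hk : 1 ≤ k) (hm : 1 ≤ m)
include hB hk hm

theorem map_eq_repr_smul_map_one {M : Type*} [AddCommMonoid M] [Module (ZMod 2) M]
    (f : Rkm k m →ₗ[ZMod 2] M) (hfu : ∀ y, f (u k m * y) = 0) (hfv : ∀ y, f (v k m * y) = 0)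
    (x : Rkm k m) : f x = B.repr x (⟨0, hk⟩, ⟨0, hm⟩) • f 1 := by
  conv_lhs => rw [← B.sum_repr x]
  rw [map_sum, Finset.sum_eq_single (⟨0, hk⟩, ⟨0, hm⟩)]
  · simp [hB]
  · rintro ⟨⟨i, hi⟩, ⟨j, hj⟩⟩ - hij
    rw [map_smul, hB]
    obtain _ | i := i
    · obtain _ | j := j
      · exact absurd rfl hij
      · rw [pow_succ', mul_left_comm, hfv, smul_zero]
    · rw [pow_succ', mul_assoc, hfu, smul_zero]
  · simp

variable (μ : Rkm k m →+* ZMod 2) (hμu : μ (u k m) = 0) (hμv : μ (v k m) = 0)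
include hμu hμv

theorem socle_mul (x : Rkm k m) : socle k m * x = μ x • socle k m := by
  have hmul : socle k m * x = B.repr x (⟨0, hk⟩, ⟨0, hm⟩) • (socle k m * 1) :=
    map_eq_repr_smul_map_one B hB hk hm (LinearMap.mulLeft (ZMod 2) (socle k m))
      (socle_mul_u hk) (socle_mul_v hm) x
  have hμ : μ x = B.repr x (⟨0, hk⟩, ⟨0, hm⟩) * μ 1 :=
    map_eq_repr_smul_map_one B hB hk hm (μ.toAddMonoidHom.toZModLinearMap 2)
      (by simp [hμu]) (by simp [hμv]) x
  rw [hmul, hμ, map_one, mul_one, mul_one]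

theorem repr_socle_mul (x : Rkm k m) :
    B.repr (socle k m * x) =
      Finsupp.single (⟨k - 1, by omega⟩, ⟨m - 1, by omega⟩) (μ x) := by
  rw [socle_mul B hB hk hm μ hμu hμv, map_smul, socle,
    ← hB (⟨k - 1, by omega⟩, ⟨m - 1, by omega⟩), B.repr_self,
    Finsupp.smul_single, smul_eq_mul, mul_one]

theorem socle_smul_ne_zero {n : ℕ} {a : Fin n → Rkm k m} (ha : (fun i => μ (a i)) ≠ 0) :
    socle k m • a ≠ 0 := by
  obtain ⟨i, hi⟩ := Function.ne_iff.mp ha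
  intro h
  have := congrArg (fun c => B.repr (c i) (⟨k - 1, by omega⟩, ⟨m - 1, by omega⟩)) h
  simp only [Pi.smul_apply, smul_eq_mul, repr_socle_mul B hB hk hm μ hμu hμv,
    Finsupp.single_eq_same, Pi.zero_apply, map_zero, Finsupp.coe_zero] at this
  exact hi this

theorem grayImage_socle_smul_ne_zero {n : ℕ} (a : Fin n → Rkm k m) (q : Fin m × Fin k × Fin n)
    (hq : grayImage B (socle k m • a) q ≠ 0) : (q.2.1 : ℕ) < 2 ∧ μ (a q.2.2) ≠ 0 := by
  obtain ⟨j, -, hsum⟩ := Finset.exists_ne_zero_of_sum_ne_zero hq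
  obtain ⟨i, hi, hne⟩ := Finset.exists_ne_zero_of_sum_ne_zero hsum
  rw [Pi.smul_apply, smul_eq_mul, repr_socle_mul B hB hk hm μ hμu hμv,
    Finsupp.single_apply] at hne
  split_ifs at hne with hij
  · have hik : (i : ℕ) = k - 1 := (congrArg (fun p => (p.1 : ℕ)) hij).symm
    exact ⟨val_lt_two_of_mem_grayInterval (by omega) hi, hne⟩
  · exact absurd rfl hne

theorem hammingNorm_grayImage_socle_smul_le {n : ℕ} (a : Fin n → Rkm k m) :
    hammingNorm (grayImage B (socle k m • a)) ≤ 2 * m * hammingNorm fun i => μ (a i) := by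
  have hsupp := hammingNorm_le_card_mul_card_mul_hammingNorm _ (fun i => μ (a i))
    (Finset.univ.filter fun t : Fin k => (t : ℕ) < 2) fun q hq => by
      simpa using grayImage_socle_smul_ne_zero B hB hk hm μ hμu hμv a q hq
  rw [Fintype.card_fin, Fin.card_filter_val_lt] at hsupp
  calc _ ≤ m * (min k 2 * hammingNorm fun i => μ (a i)) := hsupp
    _ ≤ m * (2 * hammingNorm fun i => μ (a i)) := by gcongr; exact min_le_right k 2
    _ = 2 * m * hammingNorm fun i => μ (a i) := by ring

end Basis

end Rkm

theorem Rkm_min_lee_le_general (k m n : ℕ) (hk : 1 ≤ k) (hm : 1 ≤ m)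
    (B : Module.Basis (Fin k × Fin m) (ZMod 2) (Rkm k m))
    (hB : ∀ p : Fin k × Fin m, B p = Rkm.u k m ^ (p.1 : ℕ) * Rkm.v k m ^ (p.2 : ℕ))
    (φ : (Fin n → Rkm k m) → (Fin m × Fin k × Fin n → ZMod 2))
    (hφ : ∀ a : Fin n → Rkm k m, ∀ q : Fin m × Fin k × Fin n,
      φ a q = ∑ j ∈ grayInterval m q.1, ∑ i ∈ grayInterval k q.2.1, B.repr (a q.2.2) (i, j))
    (wL : (Fin n → Rkm k m) → ℕ) (hwL : ∀ c : Fin n → Rkm k m, wL c = hammingNorm (φ c))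
    (μ : Rkm k m →+* ZMod 2) (hμu : μ (Rkm.u k m) = 0) (hμv : μ (Rkm.v k m) = 0)
    (C : Submodule (Rkm k m) (Fin n → Rkm k m))
    (hproj : ∃ a ∈ C, (fun i => μ (a i)) ≠ (0 : Fin n → ZMod 2)) :
    sInf {w : ℕ | ∃ c ∈ C, c ≠ 0 ∧ wL c = w} ≤
      2 * m * sInf {w : ℕ | ∃ a ∈ C, (fun i => μ (a i)) ≠ (0 : Fin n → ZMod 2) ∧
        hammingNorm (fun i => μ (a i)) = w} := by
  obtain ⟨a₀, ha₀C, ha₀⟩ := hproj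
  obtain ⟨a, haC, ha, hd'⟩ := Nat.sInf_mem
    (s := {w : ℕ | ∃ a ∈ C, (fun i => μ (a i)) ≠ 0 ∧ hammingNorm (fun i => μ (a i)) = w})
    ⟨_, a₀, ha₀C, ha₀, rfl⟩
  have hφ' : φ = Rkm.grayImage B := by
    funext a q
    rw [hφ a q, Rkm.grayImage]
  rw [← hd']
  have hc : Rkm.socle k m • a ≠ 0 := Rkm.socle_smul_ne_zero B hB hk hm μ hμu hμv ha
  calc sInf {w : ℕ | ∃ c ∈ C, c ≠ 0 ∧ wL c = w}
      ≤ wL (Rkm.socle k m • a) := Nat.sInf_le ⟨_, C.smul_mem _ haC, hc, rfl⟩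
    _ = hammingNorm (Rkm.grayImage B (Rkm.socle k m • a)) := by rw [hwL, hφ']
    _ ≤ 2 * m * hammingNorm fun i => μ (a i) :=
        Rkm.hammingNorm_grayImage_socle_smul_le B hB hk hm μ hμu hμv a

/-- If `C` is a linear code of length `n` over `R_{k,m}` whose binary projection `μ(C)` is
not the zero code, then the minimum Lee weight `d` of `C` and the minimum Hamming weight
`d'` of `μ(C)` satisfy `d ≤ 2 m d'`. -/
theorem Rkm_min_lee_le (k m n : ℕ) (hk : 1 ≤ k) (hm : 1 ≤ m) (hn : 1 ≤ n)
    (B : Module.Basis (Fin k × Fin m) (ZMod 2) (Rkm k m))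
    (hB : ∀ p : Fin k × Fin m, B p = Rkm.u k m ^ (p.1 : ℕ) * Rkm.v k m ^ (p.2 : ℕ))
    (φ : (Fin n → Rkm k m) → (Fin m × Fin k × Fin n → ZMod 2))
    (hφ : ∀ a : Fin n → Rkm k m, ∀ q : Fin m × Fin k × Fin n,
      φ a q = ∑ j ∈ grayInterval m q.1, ∑ i ∈ grayInterval k q.2.1, B.repr (a q.2.2) (i, j))
    (wL : (Fin n → Rkm k m) → ℕ) (hwL : ∀ c : Fin n → Rkm k m, wL c = hammingNorm (φ c))
    (μ : Rkm k m →+* ZMod 2) (hμu : μ (Rkm.u k m) = 0) (hμv : μ (Rkm.v k m) = 0)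
    (C : Submodule (Rkm k m) (Fin n → Rkm k m))
    (hproj : ∃ a ∈ C, (fun i => μ (a i)) ≠ (0 : Fin n → ZMod 2)) :
    sInf {w : ℕ | ∃ c ∈ C, c ≠ 0 ∧ wL c = w} ≤
      2 * m * sInf {w : ℕ | ∃ a ∈ C, (fun i => μ (a i)) ≠ (0 : Fin n → ZMod 2) ∧
        hammingNorm (fun i => μ (a i)) = w} :=
  Rkm_min_lee_le_general k m n hk hm B hB φ hφ wL hwL μ hμu hμv C hproj
end
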